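/- Let h > 0 and let f : ℝ≥0 → ℝ≥0 be continuous with f(0) = 0, and suppose f is non-increasing on [t, ∞) for some t ≥ 0. Then the upper compensator of the two-sided Skorohod reflection of f on [0,h] is constant on [t, ∞): cʰ(f)(s) = cʰ(f)(t) for all s ≥ t. -/

import Mathlib

/-! Fix `x ≥ t`. If the reflected path is below `h` at `x`, then `cʰ` is flat just after `x`.
Otherwise the path is at `h > 0`, so `c⁰` is flat just after `x`; if `cʰ` dropped immediately
after `x`, then, as `f` does not increase there, the path would stay strictly below `h` on some
`(x, δ]`, so `cʰ` would be flat on `(x, δ]` and, by continuity, on `[x, δ]`, a contradiction.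
Thus `cʰ` is locally constant to the right of every point of `[t, ∞)`, and being continuous it
is constant there. -/

open Set
open scoped NNReal ENNReal

/-- Solution data for the two-sided Skorohod reflection problem of `f` on `[0,h]`:
`c0` and `ch` are the compensators at `0` and at `h`,
and `fun t => f t + ch t + c0 t` is the reflected path `Λ_{0,h}(f)`.
The support conditions on the measures `dc⁰` and `d(−cʰ)` are phrased as:
the compensator is constant on every (closed) interval on which the reflected
path avoids the corresponding boundary. -/
structure SkorohodPair (h : ℝ) (f c0 ch : ℝ≥0 → ℝ) : Prop where
  cont0 : Continuous c0
  conth : Continuous ch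
  init0 : c0 0 = 0
  inith : ch 0 = 0
  mem_Icc : ∀ t, f t + ch t + c0 t ∈ Set.Icc (0 : ℝ) h
  mono0 : Monotone c0
  antih : Antitone ch
  flat0 : ∀ a b : ℝ≥0, a ≤ b → (∀ t ∈ Set.Icc a b, f t + ch t + c0 t ≠ 0) → c0 b = c0 a
  flath : ∀ a b : ℝ≥0, a ≤ b → (∀ t ∈ Set.Icc a b, f t + ch t + c0 t ≠ h) → ch b = ch a

open Filter Topology

theorem ContinuousOn.eq_of_forall_eventually_nhdsGT_eq {α β : Type*}
    [ConditionallyCompleteLinearOrder α] [TopologicalSpace α] [OrderTopology α]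
    [DenselyOrdered α] [TopologicalSpace β] [T1Space β] {g : α → β} {a b : α}
    (hg : ContinuousOn g (Icc a b)) (hab : a ≤ b)
    (hloc : ∀ x ∈ Ico a b, ∀ᶠ u in 𝓝[>] x, g u = g x) : g b = g a := by
  have hclosed : IsClosed ({u | g u = g a} ∩ Icc a b) := by
    rw [inter_comm]
    exact hg.preimage_isClosed_of_isClosed isClosed_Icc isClosed_singleton
  refine hclosed.Icc_subset_of_forall_mem_nhdsWithin rfl (fun x hx => ?_) ⟨hab, le_rfl⟩
  filter_upwards [hloc x hx.2] with u hu
  exact hu.trans hx.1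

theorem Filter.Eventually.forall_Icc_nhdsGE {α : Type*} [LinearOrder α] [TopologicalSpace α]
    [OrderTopology α] {p : α → Prop} {x : α} (hp : ∀ᶠ u in 𝓝[≥] x, p u) :
    ∀ᶠ u in 𝓝[≥] x, ∀ w ∈ Icc x u, p w := by
  obtain ⟨b, -, hb, hbp⟩ := exists_Icc_mem_subset_of_mem_nhdsGE hp
  filter_upwards [hb] with u hu w hw
  exact hbp ⟨hw.1, hw.2.trans hu.2⟩

namespace SkorohodPair

variable {h : ℝ} {f c0 ch : ℝ≥0 → ℝ}

theorem continuous_reflected (hp : SkorohodPair h f c0 ch) (hf : Continuous f) :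
    Continuous fun u => f u + ch u + c0 u :=
  (hf.add hp.conth).add hp.cont0

theorem eventually_lower_eq_of_pos (hp : SkorohodPair h f c0 ch) (hf : Continuous f)
    {x : ℝ≥0} (hx : 0 < f x + ch x + c0 x) : ∀ᶠ u in 𝓝[≥] x, c0 u = c0 x := by
  have hpos : ∀ᶠ u in 𝓝[≥] x, 0 < f u + ch u + c0 u :=
    eventually_nhdsWithin_of_eventually_nhds
      (continuousAt_const.eventually_lt (hp.continuous_reflected hf).continuousAt hx)
  filter_upwards [hpos.forall_Icc_nhdsGE, self_mem_nhdsWithin] with u hu hxu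
  exact hp.flat0 x u hxu fun w hw => (hu w hw).ne'

theorem eventually_upper_eq_of_lt (hp : SkorohodPair h f c0 ch) (hf : Continuous f)
    {x : ℝ≥0} (hx : f x + ch x + c0 x < h) : ∀ᶠ u in 𝓝[≥] x, ch u = ch x := by
  have hlt : ∀ᶠ u in 𝓝[≥] x, f u + ch u + c0 u < h :=
    eventually_nhdsWithin_of_eventually_nhds
      ((hp.continuous_reflected hf).continuousAt.eventually_lt continuousAt_const hx)
  filter_upwards [hlt.forall_Icc_nhdsGE, self_mem_nhdsWithin] with u hu hxu
  exact hp.flath x u hxu fun w hw => (hu w hw).ne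

theorem eventually_upper_eq_of_pos (hp : SkorohodPair h f c0 ch) (hf : Continuous f)
    {x : ℝ≥0} (hfx : ∀ v, x ≤ v → f v ≤ f x) (hx : 0 < f x + ch x + c0 x) :
    ∀ᶠ u in 𝓝[>] x, ch u = ch x := by
  obtain ⟨δ, hxδ, hc0⟩ :=
    mem_nhdsGE_iff_exists_Icc_subset.mp (hp.eventually_lower_eq_of_pos hf hx)
  by_contra hne
  have hdrop : ∀ w ∈ Ioc x δ, ch w < ch x := by
    refine fun w hw => (hp.antih hw.1.le).lt_of_ne fun hw_eq => hne ?_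
    filter_upwards [Ioc_mem_nhdsGT hw.1] with u hu
    exact le_antisymm (hp.antih hu.1.le) (hw_eq ▸ hp.antih hu.2)
  have hbelow : ∀ w ∈ Ioc x δ, f w + ch w + c0 w < h := fun w hw => by
    have hc0w : c0 w = c0 x := hc0 ⟨hw.1.le, hw.2⟩
    linarith [hfx w hw.1.le, hdrop w hw, (hp.mem_Icc x).2]
  have hflat : ∀ w ∈ Ioc x δ, ch δ = ch w := fun w hw =>
    hp.flath w δ hw.2 fun u hu => (hbelow u ⟨hw.1.trans_le hu.1, hu.2⟩).ne
  have hlim : Tendsto ch (𝓝[>] x) (𝓝 (ch δ)) :=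
    tendsto_const_nhds.congr' (mem_of_superset (Ioc_mem_nhdsGT hxδ) hflat)
  exact (hdrop δ ⟨hxδ, le_rfl⟩).ne
    (tendsto_nhds_unique hlim (hp.conth.continuousWithinAt.tendsto))

theorem eventually_upper_eq (hp : SkorohodPair h f c0 ch) (hh : 0 < h) (hf : Continuous f)
    {x : ℝ≥0} (hfx : ∀ v, x ≤ v → f v ≤ f x) : ∀ᶠ u in 𝓝[>] x, ch u = ch x := by
  rcases (hp.mem_Icc x).2.lt_or_eq with hlt | heq
  · exact nhdsWithin_mono _ Ioi_subset_Ici_self (hp.eventually_upper_eq_of_lt hf hlt)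
  · exact hp.eventually_upper_eq_of_pos hf hfx (heq ▸ hh)

end SkorohodPair

theorem upper_compensator_constant_of_eventually_nonincreasing
    (h : ℝ) (hh : 0 < h) (f : ℝ≥0 → ℝ) (hf : Continuous f)
    (t : ℝ≥0) (hmono : ∀ a b : ℝ≥0, t ≤ a → a ≤ b → f b ≤ f a)
    (c0 ch : ℝ≥0 → ℝ) (hp : SkorohodPair h f c0 ch) :
    ∀ s, t ≤ s → ch s = ch t := fun _ hts =>
  hp.conth.continuousOn.eq_of_forall_eventually_nhdsGT_eq hts fun x hx =>
    hp.eventually_upper_eq hh hf fun v hv => hmono x v hx.1 hv
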